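/- The epigraph of the Kalman-update map f(Σ) = Σ Cᵀ (C Σ Cᵀ + R)⁻¹ C Σ, i.e. the set {(Σ, X) : Σ ≻ 0, X ⪰ f(Σ)}, is a convex subset of the space of pairs of symmetric matrices. -/

import Mathlib

open Matrix
open scoped ComplexOrder

/-!
By the Schur complement, for `Σ ⪰ 0` the condition `X ⪰ Σ Cᵀ (C Σ Cᵀ + R)⁻¹ C Σ` says exactly that
the block matrix `[[C Σ Cᵀ + R, C Σ], [Σ Cᵀ, X]]` is positive semidefinite. That block matrix depends
affinely on `(Σ, X)`, so the epigraph is the intersection of the preimage of the convex cone of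
positive definite matrices under `(Σ, X) ↦ Σ` with the preimage of the convex cone of positive
semidefinite matrices under an affine map.
-/

section Convexity

variable {ι 𝕜 : Type*} [RCLike 𝕜]

theorem convex_setOf_posSemidef : Convex ℝ {A : Matrix ι ι 𝕜 | A.PosSemidef} :=
  fun _ hA _ hB _ _ ha hb _ => (hA.smul ha).add (hB.smul hb)

theorem convex_setOf_posDef : Convex ℝ {A : Matrix ι ι 𝕜 | A.PosDef} :=
  convex_iff_forall_pos.mpr fun _ hA _ hB _ _ ha hb _ => (hA.smul ha).add (hB.smul hb)

end Convexity

section KalmanUpdate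

variable {m n : Type*} [Fintype m] [Fintype n] [DecidableEq m]

def kalmanBlockₗ (C : Matrix m n ℝ) :
    Matrix n n ℝ × Matrix n n ℝ →ₗ[ℝ] Matrix (m ⊕ n) (m ⊕ n) ℝ where
  toFun p := fromBlocks (C * p.1 * Cᵀ) (C * p.1) (p.1 * Cᵀ) p.2
  map_add' p q := by
    simp only [Prod.fst_add, Prod.snd_add, Matrix.mul_add, Matrix.add_mul, fromBlocks_add]
  map_smul' a p := by
    simp only [Prod.smul_fst, Prod.smul_snd, Matrix.mul_smul, Matrix.smul_mul, fromBlocks_smul,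
      RingHom.id_apply]

theorem posSemidef_sub_kalmanUpdate_iff {C : Matrix m n ℝ} {R : Matrix m m ℝ} (hR : R.PosDef)
    {S : Matrix n n ℝ} (hS : S.PosSemidef) (X : Matrix n n ℝ) :
    (X - S * Cᵀ * (C * S * Cᵀ + R)⁻¹ * (C * S)).PosSemidef ↔
      (fromBlocks R 0 0 0 + kalmanBlockₗ C (S, X)).PosSemidef := by
  have hA : (C * S * Cᵀ + R).PosDef := by
    refine PosDef.posSemidef_add ?_ hR
    simpa using hS.mul_mul_conjTranspose_same C
  have : Invertible (C * S * Cᵀ + R) := hA.isUnit.invertible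
  have hB : (C * S)ᴴ = S * Cᵀ := by
    rw [conjTranspose_mul, hS.1.eq, conjTranspose_eq_transpose_of_trivial]
  have hblock : fromBlocks R 0 0 0 + kalmanBlockₗ C (S, X) =
      fromBlocks (C * S * Cᵀ + R) (C * S) (S * Cᵀ) X := by
    simp only [kalmanBlockₗ, LinearMap.coe_mk, AddHom.coe_mk, fromBlocks_add, zero_add, add_comm R]
  rw [hblock, ← hB, PosDef.fromBlocks₁₁ _ _ hA]

end KalmanUpdate

/-- The epigraph `{(Σ, X) : Σ ≻ 0, X ⪰ f(Σ)}` of the Kalman-update map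
`f(Σ) = Σ Cᵀ (C Σ Cᵀ + R)⁻¹ C Σ` is convex. -/
theorem kalman_update_epigraph_convex
    {n m : ℕ} (C : Matrix (Fin m) (Fin n) ℝ) (R : Matrix (Fin m) (Fin m) ℝ)
    (hR : R.PosDef)
    (f : Matrix (Fin n) (Fin n) ℝ → Matrix (Fin n) (Fin n) ℝ)
    (hf : ∀ S, f S = S * Cᵀ * (C * S * Cᵀ + R)⁻¹ * (C * S))
    (epi : Set (Matrix (Fin n) (Fin n) ℝ × Matrix (Fin n) (Fin n) ℝ))
    (hepi : epi = {p | p.1.PosDef ∧ (p.2 - f p.1).PosSemidef}) :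
    Convex ℝ epi := by
  have epi_eq : epi = LinearMap.fst ℝ _ _ ⁻¹' {S | S.PosDef} ∩
      kalmanBlockₗ C ⁻¹' ((fromBlocks R 0 0 0 + ·) ⁻¹' {A | A.PosSemidef}) := by
    ext ⟨S, X⟩
    simp only [hepi, hf, Set.mem_ofPred_eq, Set.mem_inter_iff, Set.mem_preimage, LinearMap.fst_apply]
    exact and_congr_right fun hS => posSemidef_sub_kalmanUpdate_iff hR hS.posSemidef X
  rw [epi_eq]
  exact (convex_setOf_posDef.linear_preimage _).inter
    ((convex_setOf_posSemidef.translate_preimage_right _).linear_preimage _)
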